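/- arXiv:1907.00669 — 3 statements merged into one kernel-verified Lean document; each statement's English description precedes it below -/
import Mathlib

section
/- For every h > 0 and each i ∈ {0, 2, 4}, the function I_i is differentiable at h and its derivative there equals I'_i(h); that is, d/dh ∫_{-x_max(h)}^{x_max(h)} x^i √(2h + x² - x⁴/2) dx = ∫_{-x_max(h)}^{x_max(h)} x^i (2h + x² - x⁴/2)^{-1/2} dx. -/
open Real Set Filter intervalIntegral MeasureTheory Topology

/-- Right endpoint of the exterior oval: `x_max(h) = √(1 + √(1+4h))`. -/
noncomputable def xmax (h : ℝ) : ℝ := Real.sqrt (1 + Real.sqrt (1 + 4*h))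

/-- Complete elliptic integral `I_i(h) = ∫_{-x_max}^{x_max} x^i √(2h + x² - x⁴/2) dx`. -/
noncomputable def ellI (i : ℕ) (h : ℝ) : ℝ :=
  ∫ x in (-xmax h)..(xmax h), x^i * Real.sqrt (2*h + x^2 - x^4/2)

/-- Complete elliptic integral `I'_i(h) = ∫_{-x_max}^{x_max} x^i (2h + x² - x⁴/2)^{-1/2} dx`. -/
noncomputable def ellI' (i : ℕ) (h : ℝ) : ℝ :=
  ∫ x in (-xmax h)..(xmax h), x^i / Real.sqrt (2*h + x^2 - x^4/2)

lemma xmax_nonneg (h : ℝ) : 0 ≤ xmax h := Real.sqrt_nonneg _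

lemma xmax_sq {h : ℝ} (hh : 0 ≤ h) : (xmax h)^2 = 1 + Real.sqrt (1 + 4*h) :=
  Real.sq_sqrt (by positivity)

lemma xmax_sq_gt_two {h : ℝ} (hh : 0 < h) : 2 < (xmax h)^2 := by
  rw [xmax_sq hh.le]
  have h1 : (1:ℝ) < Real.sqrt (1 + 4*h) := by
    have := Real.sqrt_lt_sqrt (by norm_num) (by linarith : (1:ℝ) < 1 + 4*h)
    simpa using this
  linarith

lemma one_lt_xmax {h : ℝ} (hh : 0 < h) : 1 < xmax h := by
  have h2 := xmax_sq_gt_two hh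
  nlinarith [xmax_nonneg h]

lemma xmax_mono {h₁ h₂ : ℝ} (hle : h₁ ≤ h₂) : xmax h₁ ≤ xmax h₂ :=
  Real.sqrt_le_sqrt (by have := Real.sqrt_le_sqrt (by linarith : 1 + 4*h₁ ≤ 1 + 4*h₂); linarith)

lemma duffing_factor {h : ℝ} (hh : 0 ≤ h) (x : ℝ) :
    2*h + x^2 - x^4/2 = ((xmax h)^2 - x^2) * (x^2 + (xmax h)^2 - 2) / 2 := by
  have hs : (Real.sqrt (1 + 4*h))^2 = 1 + 4*h := Real.sq_sqrt (by linarith)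
  rw [xmax_sq hh]
  nlinarith [hs]

lemma sqrt_diff_mul_le (u v : ℝ) : |Real.sqrt u - Real.sqrt v| * Real.sqrt |v| ≤ |u - v| := by
  rcases le_or_gt u 0 with hu | hu
  · rcases le_or_gt v 0 with hv | hv
    · simp [Real.sqrt_eq_zero'.2 hu, Real.sqrt_eq_zero'.2 hv]
    · rw [Real.sqrt_eq_zero'.2 hu, abs_of_pos hv]
      rw [zero_sub, abs_neg, abs_of_nonneg (Real.sqrt_nonneg v), Real.mul_self_sqrt hv.le]
      rw [abs_of_nonpos (by linarith)]
      linarith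
  · rcases le_or_gt v 0 with hv | hv
    · rw [Real.sqrt_eq_zero'.2 hv, abs_of_nonpos hv, sub_zero,
        abs_of_nonneg (Real.sqrt_nonneg u), ← Real.sqrt_mul hu.le]
      have h1 : u * -v ≤ ((u - v)/2)^2 := by nlinarith [sq_nonneg (u+v)]
      have h2 := Real.sqrt_le_sqrt h1
      rw [Real.sqrt_sq (by linarith : (0:ℝ) ≤ (u-v)/2)] at h2
      rw [abs_of_nonneg (by linarith : (0:ℝ) ≤ u - v)]
      linarith
    · have h1 : (Real.sqrt u)^2 = u := Real.sq_sqrt hu.le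
      have h2 : (Real.sqrt v)^2 = v := Real.sq_sqrt hv.le
      rw [abs_of_pos hv]
      rcases abs_cases (Real.sqrt u - Real.sqrt v) with ⟨he, _⟩ | ⟨he, _⟩ <;>
        rcases abs_cases (u - v) with ⟨he2, _⟩ | ⟨he2, _⟩ <;>
        rw [he, he2] <;>
        nlinarith [Real.sqrt_nonneg u, Real.sqrt_nonneg v]

lemma inv_sqrt_le_of_mul_le {m c f : ℝ} (hm : 0 < m) (hc : 0 ≤ c) (hmf : m * c ≤ f)
    (hf0 : c = 0 → f = 0) :
    (Real.sqrt f)⁻¹ ≤ (Real.sqrt m)⁻¹ * (Real.sqrt c)⁻¹ := by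
  rcases eq_or_ne c 0 with rfl | hne
  · rw [hf0 rfl]
    simp
  · have hcpos : 0 < c := hc.lt_of_ne (Ne.symm hne)
    have h1 : Real.sqrt m * Real.sqrt c ≤ Real.sqrt f := by
      rw [← Real.sqrt_mul hm.le]
      exact Real.sqrt_le_sqrt hmf
    have hpos : 0 < Real.sqrt m * Real.sqrt c :=
      mul_pos (Real.sqrt_pos.2 hm) (Real.sqrt_pos.2 hcpos)
    have h2 := inv_anti₀ hpos h1
    rwa [mul_inv] at h2
lemma rpow_neg_half_of_neg {y : ℝ} (hy : y < 0) : y ^ (-(1/2) : ℝ) = 0 := by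
  rw [Real.rpow_def_of_neg hy, show (-(1/2) : ℝ) * π = -(π/2) by ring, Real.cos_neg,
    Real.cos_pi_div_two, mul_zero]

lemma inv_sqrt_abs_eq (c x : ℝ) (hx : x ≠ c) :
    (Real.sqrt |x - c|)⁻¹ = (x - c) ^ (-(1/2) : ℝ) + (c - x) ^ (-(1/2) : ℝ) := by
  rcases lt_or_gt_of_ne hx with hlt | hgt
  · rw [rpow_neg_half_of_neg (by linarith : x - c < 0), abs_of_neg (by linarith : x - c < 0),
      neg_sub, Real.sqrt_eq_rpow, ← Real.rpow_neg (by linarith : (0:ℝ) ≤ c - x)]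
    ring
  · rw [rpow_neg_half_of_neg (by linarith : c - x < 0), abs_of_pos (by linarith : 0 < x - c),
      Real.sqrt_eq_rpow, ← Real.rpow_neg (by linarith : (0:ℝ) ≤ x - c)]
    ring

lemma intervalIntegrable_inv_sqrt_abs (c p q : ℝ) :
    IntervalIntegrable (fun x => (Real.sqrt |x - c|)⁻¹) volume p q := by
  have hr : (-1 : ℝ) < -(1/2) := by norm_num
  have h1 : IntervalIntegrable (fun x => (x - c) ^ (-(1/2) : ℝ)) volume p q := by
    have := (intervalIntegrable_rpow' (a := p - c) (b := q - c) hr).comp_sub_right c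
    simpa using this
  have h2 : IntervalIntegrable (fun x => (c - x) ^ (-(1/2) : ℝ)) volume p q := by
    have := (intervalIntegrable_rpow' (a := c - p) (b := c - q) hr).comp_sub_left c
    simpa using this
  have h3 := h1.add h2
  rw [intervalIntegrable_iff] at h3 ⊢
  apply h3.congr
  have hae : ∀ᵐ x : ℝ, x ≠ c := by
    rw [ae_iff]
    have hs : {x : ℝ | ¬ x ≠ c} = {c} := by ext; simp
    rw [hs]; simp
  filter_upwards [ae_restrict_of_ae hae] with x hx
  exact (inv_sqrt_abs_eq c x hx).symm
lemma integrable_bound {h : ℝ} (hh : 0 < h) (R : ℝ) :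
    IntegrableOn (fun x => (Real.sqrt |2*h + x^2 - x^4/2|)⁻¹) (Ioc (-R) R) volume := by
  have ha1 : 1 < xmax h := one_lt_xmax hh
  have ha2 : 2 < (xmax h)^2 := xmax_sq_gt_two hh
  set a := xmax h with ha
  set m : ℝ := a*(a^2-2)/2 with hm
  have hm0 : 0 < m := by rw [hm]; nlinarith
  have hint : IntegrableOn
      (fun x => (Real.sqrt m)⁻¹ * ((Real.sqrt |x - a|)⁻¹ + (Real.sqrt |x + a|)⁻¹))
      (Ioc (-R) R) volume := by
    have i1 := intervalIntegrable_inv_sqrt_abs a (-R) R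
    have i2 : IntervalIntegrable (fun x => (Real.sqrt |x + a|)⁻¹) volume (-R) R := by
      simpa [sub_neg_eq_add] using intervalIntegrable_inv_sqrt_abs (-a) (-R) R
    have i3 := (i1.add i2).const_mul ((Real.sqrt m)⁻¹)
    rcases le_or_gt (-R) R with hRR | hRR
    · rw [intervalIntegrable_iff, uIoc_of_le hRR] at i3
      exact i3
    · rw [Ioc_eq_empty (by intro hc; linarith)]
      exact integrableOn_empty
  refine Integrable.mono' hint ?_ ?_
  · exact (Measurable.inv (Real.continuous_sqrt.measurable.comp
      ((continuous_abs.comp (by continuity : Continuous fun x : ℝ => 2*h + x^2 - x^4/2)).measurable))).aestronglyMeasurable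
  · refine ae_of_all _ fun x => ?_
    rw [Real.norm_eq_abs, abs_of_nonneg (by positivity)]
    rcases le_total 0 x with hx | hx
    · have hfabs : |2*h + x^2 - x^4/2| = |x - a| * ((x + a) * ((x^2 + a^2 - 2)/2)) := by
        rw [duffing_factor hh.le, ← ha]
        rw [show ((a^2 - x^2) * (x^2 + a^2 - 2) / 2 : ℝ)
            = -((x - a) * ((x + a) * ((x^2 + a^2 - 2)/2))) by ring, abs_neg, abs_mul]
        rw [abs_of_nonneg (by nlinarith : (0:ℝ) ≤ (x + a) * ((x^2 + a^2 - 2)/2))]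
      have hb : (Real.sqrt |2*h + x^2 - x^4/2|)⁻¹
          ≤ (Real.sqrt m)⁻¹ * (Real.sqrt |x - a|)⁻¹ := by
        refine inv_sqrt_le_of_mul_le hm0 (abs_nonneg _) ?_ ?_
        · rw [hfabs]
          have step : m ≤ (x + a) * ((x^2 + a^2 - 2)/2) := by
            rw [hm]
            nlinarith [sq_nonneg x, mul_nonneg hx (by nlinarith : (0:ℝ) ≤ x^2 + a^2 - 2)]
          calc m * |x - a| = |x - a| * m := mul_comm _ _
            _ ≤ |x - a| * ((x + a) * ((x^2 + a^2 - 2)/2)) :=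
              mul_le_mul_of_nonneg_left step (abs_nonneg _)
        · intro h0; rw [hfabs, h0, zero_mul]
      refine hb.trans ?_
      exact mul_le_mul_of_nonneg_left (le_add_of_nonneg_right (by positivity)) (by positivity)
    · have hfabs : |2*h + x^2 - x^4/2| = |x + a| * ((a - x) * ((x^2 + a^2 - 2)/2)) := by
        rw [duffing_factor hh.le, ← ha]
        rw [show ((a^2 - x^2) * (x^2 + a^2 - 2) / 2 : ℝ)
            = (x + a) * ((a - x) * ((x^2 + a^2 - 2)/2)) by ring, abs_mul]
        rw [abs_of_nonneg (by nlinarith : (0:ℝ) ≤ (a - x) * ((x^2 + a^2 - 2)/2))]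
      have hb : (Real.sqrt |2*h + x^2 - x^4/2|)⁻¹
          ≤ (Real.sqrt m)⁻¹ * (Real.sqrt |x + a|)⁻¹ := by
        refine inv_sqrt_le_of_mul_le hm0 (abs_nonneg _) ?_ ?_
        · rw [hfabs]
          have step : m ≤ (a - x) * ((x^2 + a^2 - 2)/2) := by
            rw [hm]
            nlinarith [sq_nonneg x, mul_nonneg (neg_nonneg.2 hx) (by nlinarith : (0:ℝ) ≤ x^2 + a^2 - 2)]
          calc m * |x + a| = |x + a| * m := mul_comm _ _
            _ ≤ |x + a| * ((a - x) * ((x^2 + a^2 - 2)/2)) :=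
              mul_le_mul_of_nonneg_left step (abs_nonneg _)
        · intro h0; rw [hfabs, h0, zero_mul]
      refine hb.trans ?_
      exact mul_le_mul_of_nonneg_left (le_add_of_nonneg_left (by positivity)) (by positivity)
set_option maxHeartbeats 1000000 in
/-- For every `h > 0` and `i ∈ {0, 2, 4}`, the integral `I_i` is differentiable
at `h` with derivative `I'_i(h)`. -/
theorem hasDerivAt_ellI (h : ℝ) (hh : 0 < h) (i : ℕ) (hi : i ∈ ({0, 2, 4} : Set ℕ)) :
    HasDerivAt (ellI i) (ellI' i h) h := by
  clear hi
  have ha1 : 1 < xmax h := one_lt_xmax hh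
  have ha2 : 2 < (xmax h)^2 := xmax_sq_gt_two hh
  set a := xmax h with ha
  set R := xmax (2*h) with hRdef
  have haR : a ≤ R := xmax_mono (by linarith)
  have hR1 : 1 < R := lt_of_lt_of_le ha1 haR
  have hRR : -R ≤ R := by linarith
  set F : ℝ → ℝ → ℝ := fun t x => x^i * Real.sqrt (2*t + x^2 - x^4/2) with hF
  set g : ℝ → ℝ := fun x => x^i / Real.sqrt (2*h + x^2 - x^4/2) with hg
  have hcontF : ∀ t, Continuous (F t) := fun t =>
    (continuous_pow i).mul (Real.continuous_sqrt.comp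
      ((continuous_const.add (continuous_pow 2)).sub ((continuous_pow 4).div_const 2)))
  -- the integrand is nonpositive under the sqrt outside the oval
  have hvanish : ∀ t : ℝ, 0 ≤ t → ∀ x : ℝ, xmax t ≤ |x| → 2*t + x^2 - x^4/2 ≤ 0 := by
    intro t ht x hx
    rw [duffing_factor ht]
    have h1 : (xmax t)^2 ≤ x^2 := by
      have := pow_le_pow_left₀ (xmax_nonneg t) hx 2
      rwa [sq_abs] at this
    have h2 : 0 ≤ x^2 + (xmax t)^2 - 2 := by
      have hs : (1:ℝ) ≤ Real.sqrt (1 + 4*t) := by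
        have := Real.sqrt_le_sqrt (by linarith : (1:ℝ) ≤ 1 + 4*t)
        rwa [Real.sqrt_one] at this
      have := xmax_sq ht
      nlinarith [sq_nonneg x]
    nlinarith [mul_nonneg h2 (by linarith : (0:ℝ) ≤ x^2 - (xmax t)^2)]
  -- factorised nonvanishing away from ±a
  have hfx_ne : ∀ x : ℝ, x ≠ a → x ≠ -a → 2*h + x^2 - x^4/2 ≠ 0 := by
    intro x hx1 hx2
    rw [duffing_factor hh.le, ← ha]
    have h1 : a^2 - x^2 ≠ 0 := by
      intro hc
      rcases mul_eq_zero.1 (show (x - a) * (x + a) = 0 by nlinarith) with hc' | hc'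
      · exact hx1 (by linarith)
      · exact hx2 (by linarith)
    have h2 : (0:ℝ) < x^2 + a^2 - 2 := by nlinarith [sq_nonneg x]
    exact div_ne_zero (mul_ne_zero h1 (ne_of_gt h2)) two_ne_zero
  -- Step A : near h the elliptic integral coincides with a fixed-endpoint integral
  have hev : (fun t => ∫ x in (-R)..R, F t x) =ᶠ[𝓝 h] ellI i := by
    filter_upwards [Ioo_mem_nhds hh (by linarith : h < 2*h)] with t ht
    have hxt : xmax t ≤ R := xmax_mono (le_of_lt ht.2)
    have hxt0 : 0 ≤ xmax t := xmax_nonneg t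
    have hzero_right : ∫ x in (xmax t)..R, F t x = 0 := by
      have heq : EqOn (F t) (fun _ => 0) (uIcc (xmax t) R) := by
        intro x hx
        rw [uIcc_of_le hxt] at hx
        have hxx : xmax t ≤ |x| := le_trans hx.1 (le_abs_self x)
        simp only [hF]
        rw [Real.sqrt_eq_zero'.2 (hvanish t ht.1.le x hxx), mul_zero]
      rw [intervalIntegral.integral_congr heq]
      simp
    have hzero_left : ∫ x in (-R)..(-(xmax t)), F t x = 0 := by
      have heq : EqOn (F t) (fun _ => 0) (uIcc (-R) (-(xmax t))) := by
        intro x hx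
        rw [uIcc_of_le (by linarith : -R ≤ -(xmax t))] at hx
        have hxx : xmax t ≤ |x| := le_trans (by linarith [hx.2] : xmax t ≤ -x) (neg_le_abs x)
        simp only [hF]
        rw [Real.sqrt_eq_zero'.2 (hvanish t ht.1.le x hxx), mul_zero]
      rw [intervalIntegral.integral_congr heq]
      simp
    have hI : ∀ p q : ℝ, IntervalIntegrable (F t) volume p q := fun p q =>
      (hcontF t).intervalIntegrable _ _
    have e1 := intervalIntegral.integral_add_adjacent_intervals
      (hI (-R) (-(xmax t))) (hI (-(xmax t)) R)
    have e2 := intervalIntegral.integral_add_adjacent_intervals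
      (hI (-(xmax t)) (xmax t)) (hI (xmax t) R)
    show ∫ x in (-R)..R, F t x = ellI i t
    rw [← e1, ← e2, hzero_left, hzero_right, zero_add, add_zero]
    simp [ellI, hF]
  -- Step B : derivative of the fixed-endpoint integral
  set μ : Measure ℝ := volume.restrict (Ioc (-R) R) with hμ
  set B : ℝ → ℝ := fun x => R^i * (2 * (Real.sqrt |2*h + x^2 - x^4/2|)⁻¹) with hB
  have hBint : Integrable B μ := ((integrable_bound hh R).const_mul 2).const_mul (R^i)
  have hae_ne : ∀ᵐ x ∂μ, x ≠ a ∧ x ≠ -a := by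
    refine ae_restrict_of_ae ?_
    rw [ae_iff]
    have hset : {x : ℝ | ¬(x ≠ a ∧ x ≠ -a)} = {a} ∪ {-a} := by
      ext y
      simp only [mem_setOf_eq, not_and_or, not_not, mem_union, mem_singleton_iff, ne_eq]
    rw [hset]
    exact measure_union_null (measure_singleton a) (measure_singleton (-a))
  have hae_mem : ∀ᵐ x ∂μ, x ∈ Ioc (-R) R := ae_restrict_mem measurableSet_Ioc
  have hFint : ∀ t, Integrable (F t) μ := fun t => (hcontF t).integrableOn_Ioc
  -- a.e. pointwise convergence of difference quotients
  have hlim : ∀ᵐ x ∂μ, Tendsto (fun t => (t - h)⁻¹ * (F t x - F h x)) (𝓝[≠] h) (𝓝 (g x)) := by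
    filter_upwards [hae_ne] with x hx
    have hfx := hfx_ne x hx.1 hx.2
    rcases lt_or_gt_of_ne hfx with hneg | hpos
    · have hgx : g x = 0 := by
        simp only [hg]
        rw [Real.sqrt_eq_zero'.2 hneg.le, div_zero]
      rw [hgx]
      have hev0 : (fun t => (t - h)⁻¹ * (F t x - F h x)) =ᶠ[𝓝[≠] h] (fun _ => 0) := by
        have hball : ∀ᶠ t in 𝓝 h, |t - h| < -(2*h + x^2 - x^4/2)/2 := by
          filter_upwards [Metric.ball_mem_nhds h
            (by linarith : (0:ℝ) < -(2*h + x^2 - x^4/2)/2)] with t ht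
          simpa [Real.dist_eq] using ht
        filter_upwards [nhdsWithin_le_nhds hball] with t ht
        have hneg' : 2*t + x^2 - x^4/2 ≤ 0 := by
          have h1 := le_abs_self (t - h)
          linarith
        simp only [hF]
        rw [Real.sqrt_eq_zero'.2 hneg', Real.sqrt_eq_zero'.2 hneg.le]
        ring
      exact (tendsto_congr' hev0).2 tendsto_const_nhds
    · have hsq := Real.hasDerivAt_sqrt (ne_of_gt hpos)
      have hlin : HasDerivAt (fun t : ℝ => 2*t + x^2 - x^4/2) 2 h := by
        simpa using (((hasDerivAt_id h).const_mul (2:ℝ)).add_const (x^2)).sub_const (x^4/2)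
      have hmul := (hsq.comp h hlin).const_mul ((x:ℝ)^i)
      have hval : (x:ℝ)^i * (1/(2*Real.sqrt (2*h + x^2 - x^4/2)) * 2) = g x := by
        simp only [hg]
        have hs0 : Real.sqrt (2*h + x^2 - x^4/2) ≠ 0 :=
          ne_of_gt (Real.sqrt_pos.2 hpos)
        generalize hsv : Real.sqrt (2*h + x^2 - x^4/2) = sv at hs0 ⊢
        field_simp
      have htt := hasDerivAt_iff_tendsto_slope.1 hmul
      rw [hval] at htt
      refine Tendsto.congr (fun t => ?_) htt
      rw [slope_def_field]
      simp only [hF, Function.comp]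
      ring
  -- the uniform bound on difference quotients
  have hbound : ∀ᶠ t in 𝓝[≠] h, ∀ᵐ x ∂μ, ‖(t - h)⁻¹ * (F t x - F h x)‖ ≤ B x := by
    filter_upwards [self_mem_nhdsWithin] with t htm
    have ht : t ≠ h := htm
    filter_upwards [hae_ne, hae_mem] with x hx hxm
    have hfx := hfx_ne x hx.1 hx.2
    have hs_pos : 0 < Real.sqrt |2*h + x^2 - x^4/2| := Real.sqrt_pos.2 (abs_pos.2 hfx)
    have h2 : |Real.sqrt (2*t + x^2 - x^4/2) - Real.sqrt (2*h + x^2 - x^4/2)|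
        ≤ 2 * |t - h| * (Real.sqrt |2*h + x^2 - x^4/2|)⁻¹ := by
      have h1 := sqrt_diff_mul_le (2*t + x^2 - x^4/2) (2*h + x^2 - x^4/2)
      have hd : |(2*t + x^2 - x^4/2) - (2*h + x^2 - x^4/2)| = 2*|t - h| := by
        rw [show (2*t + x^2 - x^4/2) - (2*h + x^2 - x^4/2) = 2*(t - h) by ring,
          abs_mul, abs_two]
      rw [hd] at h1
      calc |Real.sqrt (2*t + x^2 - x^4/2) - Real.sqrt (2*h + x^2 - x^4/2)|
          ≤ 2*|t - h| / Real.sqrt |2*h + x^2 - x^4/2| := (le_div_iff₀ hs_pos).2 h1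
        _ = 2*|t - h| * (Real.sqrt |2*h + x^2 - x^4/2|)⁻¹ := div_eq_mul_inv _ _
    have hdiff : F t x - F h x
        = x^i * (Real.sqrt (2*t + x^2 - x^4/2) - Real.sqrt (2*h + x^2 - x^4/2)) := by
      simp only [hF]; ring
    rw [hdiff, Real.norm_eq_abs, abs_mul, abs_mul, abs_inv]
    have hxR : |x| ≤ R := abs_le.2 ⟨le_of_lt hxm.1, hxm.2⟩
    have hxiR : |x^i| ≤ R^i := by
      rw [abs_pow]; exact pow_le_pow_left₀ (abs_nonneg x) hxR i
    have hth : (0:ℝ) < |t - h| := abs_pos.2 (sub_ne_zero.2 ht)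
    have hR0 : (0:ℝ) < R := by linarith
    have step : |x^i| * |Real.sqrt (2*t + x^2 - x^4/2) - Real.sqrt (2*h + x^2 - x^4/2)|
        ≤ R^i * (2*|t - h| * (Real.sqrt |2*h + x^2 - x^4/2|)⁻¹) :=
      mul_le_mul hxiR h2 (abs_nonneg _) (by positivity)
    have step2 := mul_le_mul_of_nonneg_left step
      (by positivity : (0:ℝ) ≤ |t - h|⁻¹)
    refine step2.trans (le_of_eq ?_)
    simp only [hB]
    rw [show |t - h|⁻¹ * (R ^ i * (2 * |t - h| * (Real.sqrt |2*h + x^2 - x^4/2|)⁻¹))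
        = (|t - h|⁻¹ * |t - h|) * (R ^ i * (2 * (Real.sqrt |2*h + x^2 - x^4/2|)⁻¹)) from by
      ring, inv_mul_cancel₀ hth.ne', one_mul]
  -- measurability of the quotients
  have hmeas : ∀ᶠ t in 𝓝[≠] h,
      AEStronglyMeasurable (fun x => (t - h)⁻¹ * (F t x - F h x)) μ :=
    Eventually.of_forall fun t =>
      (continuous_const.mul ((hcontF t).sub (hcontF h))).aestronglyMeasurable
  have hDCT := MeasureTheory.tendsto_integral_filter_of_dominated_convergence
    (μ := μ) B hmeas hbound hBint hlim
  -- identify the integrals with slopes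
  have hslope : ∀ᶠ t in 𝓝[≠] h,
      (∫ x, (t - h)⁻¹ * (F t x - F h x) ∂μ) = slope (fun t => ∫ x, F t x ∂μ) h t := by
    filter_upwards [self_mem_nhdsWithin] with t htm
    have ht : t ≠ h := htm
    rw [slope_def_field, MeasureTheory.integral_const_mul,
      MeasureTheory.integral_sub (hFint t) (hFint h)]
    ring
  have htendsto : Tendsto (slope (fun t => ∫ x, F t x ∂μ) h) (𝓝[≠] h)
      (𝓝 (∫ x, g x ∂μ)) := (tendsto_congr' hslope).1 hDCT
  have hJ : HasDerivAt (fun t => ∫ x, F t x ∂μ) (∫ x, g x ∂μ) h :=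
    hasDerivAt_iff_tendsto_slope.2 htendsto
  -- identify the limit integral with ellI'
  have hgmeas : AEStronglyMeasurable g μ := by
    have hcv : Continuous fun x : ℝ => 2*h + x^2 - x^4/2 :=
      (continuous_const.add (continuous_pow 2)).sub ((continuous_pow 4).div_const 2)
    exact (((continuous_pow i).measurable).div
      ((Real.continuous_sqrt.comp hcv).measurable)).aestronglyMeasurable
  have hgIntOn : IntegrableOn g (Ioc (-R) R) volume := by
    refine Integrable.mono' hBint hgmeas ?_
    filter_upwards [hae_mem] with x hxm
    have hxR : |x| ≤ R := abs_le.2 ⟨le_of_lt hxm.1, hxm.2⟩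
    have hxiR : |x|^i ≤ R^i := pow_le_pow_left₀ (abs_nonneg x) hxR i
    rw [Real.norm_eq_abs]
    simp only [hg, hB]
    rcases le_or_gt (2*h + x^2 - x^4/2) 0 with hv | hv
    · rw [Real.sqrt_eq_zero'.2 hv, div_zero, abs_zero]
      positivity
    · rw [abs_of_pos hv, abs_div, abs_of_nonneg (Real.sqrt_nonneg _), abs_pow,
        div_eq_mul_inv]
      have hc : (0:ℝ) ≤ (Real.sqrt (2*h + x^2 - x^4/2))⁻¹ := by positivity
      have hRi : (0:ℝ) ≤ R^i := by positivity
      nlinarith [mul_le_mul_of_nonneg_right hxiR hc, mul_nonneg hRi hc]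
  have hsplit : (∫ x, g x ∂μ) = ellI' i h := by
    have hIg : ∀ p q : ℝ, uIoc p q ⊆ Ioc (-R) R → IntervalIntegrable g volume p q :=
      fun p q hsub => intervalIntegrable_iff.2 (hgIntOn.mono_set hsub)
    have hga : (0:ℝ) < a := by linarith
    have hsub1 : uIoc (-R) (-a) ⊆ Ioc (-R) R := by
      rw [uIoc_of_le (by linarith : -R ≤ -a)]
      exact Ioc_subset_Ioc le_rfl (by linarith)
    have hsub2 : uIoc (-a) a ⊆ Ioc (-R) R := by
      rw [uIoc_of_le (by linarith : -a ≤ a)]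
      exact Ioc_subset_Ioc (by linarith) (by linarith)
    have hsub3 : uIoc a R ⊆ Ioc (-R) R := by
      rw [uIoc_of_le haR]
      exact Ioc_subset_Ioc (by linarith) le_rfl
    have hsub4 : uIoc (-a) R ⊆ Ioc (-R) R := by
      rw [uIoc_of_le (by linarith : -a ≤ R)]
      exact Ioc_subset_Ioc (by linarith) le_rfl
    have hz1 : ∫ x in (-R)..(-a), g x = 0 := by
      have heq : EqOn g (fun _ => 0) (uIcc (-R) (-a)) := by
        intro x hx
        rw [uIcc_of_le (by linarith : -R ≤ -a)] at hx
        have hxx : a ≤ |x| := le_trans (by linarith [hx.2] : a ≤ -x) (neg_le_abs x)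
        simp only [hg]
        rw [Real.sqrt_eq_zero'.2 (hvanish h hh.le x (by rwa [← ha])), div_zero]
      rw [intervalIntegral.integral_congr heq]
      simp
    have hz3 : ∫ x in a..R, g x = 0 := by
      have heq : EqOn g (fun _ => 0) (uIcc a R) := by
        intro x hx
        rw [uIcc_of_le haR] at hx
        have hxx : a ≤ |x| := le_trans hx.1 (le_abs_self x)
        simp only [hg]
        rw [Real.sqrt_eq_zero'.2 (hvanish h hh.le x (by rwa [← ha])), div_zero]
      rw [intervalIntegral.integral_congr heq]
      simp
    have e1 := intervalIntegral.integral_add_adjacent_intervals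
      (hIg (-R) (-a) hsub1) (hIg (-a) R hsub4)
    have e2 := intervalIntegral.integral_add_adjacent_intervals
      (hIg (-a) a hsub2) (hIg a R hsub3)
    calc (∫ x, g x ∂μ) = ∫ x in (-R)..R, g x :=
          (intervalIntegral.integral_of_le hRR).symm
      _ = ∫ x in (-a)..a, g x := by rw [← e1, ← e2, hz1, hz3, zero_add, add_zero]
      _ = ellI' i h := by simp [ellI', hg, ← ha]
  have hfe : (fun t => ∫ x in (-R)..R, F t x) = fun t => ∫ x, F t x ∂μ :=
    funext fun t => intervalIntegral.integral_of_le hRR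
  have hJ' : HasDerivAt (fun t => ∫ x in (-R)..R, F t x) (ellI' i h) h := by
    rw [hfe, ← hsplit]
    exact hJ
  exact hJ'.congr_of_eventuallyEq hev.symm
end

section
/- (First Picard–Fuchs relation.) For every h > 0 one has I_0(h) = (4/3)·h·I'_0(h) + (1/3)·I'_2(h). -/
/-!
With `P(x) = 2h + x² - x⁴/2` (the value of `y²` on the oval), the identity `√P = P / √P` gives
`I₀ = 2h I'₀ + I'₂ - I'₄ / 2`, and integrating `(x √P)' = √P + (x² - x⁴) / √P` over
`[-x_max, x_max]`, where `P` vanishes at both ends, gives `I'₄ = I₀ + I'₂`. Eliminating `I'₄`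
yields the relation. The integrals `I'ᵢ` converge because the zeros `±x_max` of `P` are simple:
`P ≥ c (x_max² - x²)` with `c = (√(1+4h) - 1) / 2 > 0`, and `(x_max² - x²)^(-1/2)` is integrable.
-/

open Real Set Filter intervalIntegral

open MeasureTheory (volume ae_restrict_of_forall_mem)

theorem intervalIntegrable_inv_sqrt_sq_sub_sq {a : ℝ} (ha : 0 < a) :
    IntervalIntegrable (fun x => (√(a ^ 2 - x ^ 2))⁻¹) volume (-a) a := by
  have hscaled := (Polynomial.Chebyshev.intervalIntegrable_sqrt_one_sub_sq_inv.comp_mul_left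
    (c := a⁻¹)).const_mul a⁻¹
  simp only [div_inv_eq_mul, neg_one_mul, one_mul] at hscaled
  refine hscaled.congr fun x _ => ?_
  have : a ^ 2 - x ^ 2 = a ^ 2 * (1 - (a⁻¹ * x) ^ 2) := by field_simp
  simp only [this, sqrt_mul (sq_nonneg a), sqrt_sq ha.le, sqrt_inv, mul_inv]

theorem intervalIntegrable_inv_sqrt_of_mul_sq_sub_sq_le {P : ℝ → ℝ} {a k : ℝ} (ha : 0 < a)
    (hk : 0 < k) (hP : ContinuousOn P (Ioo (-a) a))
    (hle : ∀ x ∈ Ioo (-a) a, k * (a ^ 2 - x ^ 2) ≤ P x) :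
    IntervalIntegrable (fun x => (√(P x))⁻¹) volume (-a) a := by
  have hpos : ∀ x ∈ Ioo (-a) a, 0 < k * (a ^ 2 - x ^ 2) := fun x hx => by
    have : 0 < a ^ 2 - x ^ 2 := by nlinarith [hx.1, hx.2]
    positivity
  have hdom := (intervalIntegrable_inv_sqrt_sq_sub_sq ha).const_mul (√k)⁻¹
  rw [intervalIntegrable_iff_integrableOn_Ioo_of_le (by linarith)] at hdom ⊢
  refine hdom.mono' ?_ (ae_restrict_of_forall_mem measurableSet_Ioo fun x hx => ?_)
  · refine (hP.sqrt.inv₀ fun x hx => ?_).aestronglyMeasurable measurableSet_Ioo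
    exact (sqrt_pos.2 ((hpos x hx).trans_le (hle x hx))).ne'
  · rw [norm_inv, norm_of_nonneg (sqrt_nonneg _), ← mul_inv, ← sqrt_mul hk.le]
    exact inv_anti₀ (sqrt_pos.2 (hpos x hx)) (sqrt_le_sqrt (hle x hx))

theorem integral_sqrt_add_mul_deriv_div_sqrt_eq_zero {P P' : ℝ → ℝ} {a b : ℝ} (hab : a ≤ b)
    (hPc : ContinuousOn P (Icc a b)) (hPd : ∀ x ∈ Ioo a b, HasDerivAt P (P' x) x)
    (hP0 : ∀ x ∈ Ioo a b, P x ≠ 0) (ha : P a = 0) (hb : P b = 0)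
    (hint : IntervalIntegrable (fun x => √(P x) + x * P' x / (2 * √(P x))) volume a b) :
    ∫ x in a..b, (√(P x) + x * P' x / (2 * √(P x))) = 0 := by
  have hderiv : ∀ x ∈ Ioo a b,
      HasDerivAt (fun x => x * √(P x)) (√(P x) + x * P' x / (2 * √(P x))) x := fun x hx =>
    ((hasDerivAt_id' x).fun_mul ((hPd x hx).sqrt (hP0 x hx))).congr_deriv (by ring)
  rw [integral_eq_sub_of_hasDerivAt_of_le hab (continuousOn_id.mul hPc.sqrt) hderiv hint]
  simp [ha, hb]

/-- `y²` as a function of `x` on the level set `H = h`. -/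
noncomputable def ySq (h x : ℝ) : ℝ := 2 * h + x ^ 2 - x ^ 4 / 2

theorem ellI_eq (i : ℕ) (h : ℝ) : ellI i h = ∫ x in -xmax h..xmax h, x ^ i * √(ySq h x) := rfl

theorem ellI'_eq (i : ℕ) (h : ℝ) : ellI' i h = ∫ x in -xmax h..xmax h, x ^ i / √(ySq h x) := rfl

theorem ySq_neg (h x : ℝ) : ySq h (-x) = ySq h x := by
  unfold ySq; ring

theorem continuous_ySq (h : ℝ) : Continuous (ySq h) := by
  unfold ySq; fun_prop

theorem hasDerivAt_ySq (h x : ℝ) : HasDerivAt (ySq h) (2 * x - 2 * x ^ 3) x := by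
  have := ((hasDerivAt_pow 2 x).const_add (2 * h)).sub ((hasDerivAt_pow 4 x).div_const 2)
  exact this.congr_deriv (by ring)

theorem xmax_pos (h : ℝ) : 0 < xmax h :=
  sqrt_pos.2 (by positivity)

section Duffing

variable {h : ℝ}

theorem ySq_eq_mul (hh : 0 ≤ 1 + 4 * h) (x : ℝ) :
    ySq h x = (xmax h ^ 2 - x ^ 2) * (x ^ 2 + (√(1 + 4 * h) - 1)) / 2 := by
  rw [ySq, xmax, sq_sqrt (by positivity)]
  linear_combination (-1 / 2 : ℝ) * sq_sqrt hh

theorem ySq_xmax (hh : 0 ≤ 1 + 4 * h) : ySq h (xmax h) = 0 := by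
  simp [ySq_eq_mul hh]

theorem ySq_neg_xmax (hh : 0 ≤ 1 + 4 * h) : ySq h (-xmax h) = 0 := by
  rw [ySq_neg, ySq_xmax hh]

theorem mul_sq_sub_sq_le_ySq (hh : 0 ≤ 1 + 4 * h) {x : ℝ} (hx : x ∈ Icc (-xmax h) (xmax h)) :
    (√(1 + 4 * h) - 1) / 2 * (xmax h ^ 2 - x ^ 2) ≤ ySq h x := by
  have : 0 ≤ xmax h ^ 2 - x ^ 2 := sub_nonneg.2 (sq_le_sq' hx.1 hx.2)
  rw [ySq_eq_mul hh]
  nlinarith [mul_nonneg this (sq_nonneg x)]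

theorem one_lt_sqrt_one_add_four_mul (hh : 0 < h) : 1 < √(1 + 4 * h) := by
  rw [lt_sqrt zero_le_one]; linarith

theorem ySq_pos (hh : 0 < h) {x : ℝ} (hx : x ∈ Ioo (-xmax h) (xmax h)) : 0 < ySq h x := by
  have hs := one_lt_sqrt_one_add_four_mul hh
  have : 0 < xmax h ^ 2 - x ^ 2 := sub_pos.2 (sq_lt_sq' hx.1 hx.2)
  have := mul_sq_sub_sq_le_ySq (by linarith) (Ioo_subset_Icc_self hx)
  nlinarith

theorem intervalIntegrable_pow_div_sqrt_ySq (hh : 0 < h) (i : ℕ) :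
    IntervalIntegrable (fun x => x ^ i / √(ySq h x)) volume (-xmax h) (xmax h) := by
  have hk : 0 < (√(1 + 4 * h) - 1) / 2 := by linarith [one_lt_sqrt_one_add_four_mul hh]
  have := (intervalIntegrable_inv_sqrt_of_mul_sq_sub_sq_le (xmax_pos h) hk
    (continuous_ySq h).continuousOn fun x hx =>
      mul_sq_sub_sq_le_ySq (by linarith) (Ioo_subset_Icc_self hx)).continuousOn_mul
    (continuousOn_pow i)
  simpa only [div_eq_mul_inv] using this

theorem ellI_zero_eq (hh : 0 < h) : ellI 0 h = 2 * h * ellI' 0 h + ellI' 2 h - ellI' 4 h / 2 := by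
  have hi := intervalIntegrable_pow_div_sqrt_ySq hh
  rw [ellI_eq, ellI'_eq, ellI'_eq, ellI'_eq, ← integral_const_mul,
    ← integral_add ((hi 0).const_mul _) (hi 2), ← integral_div,
    ← integral_sub (((hi 0).const_mul _).add (hi 2)) ((hi 4).div_const 2)]
  refine integral_congr fun x _ => ?_
  conv_lhs => rw [← div_sqrt]
  unfold ySq
  ring

theorem ellI'_four_eq (hh : 0 < h) : ellI' 4 h = ellI 0 h + ellI' 2 h := by
  have hi := intervalIntegrable_pow_div_sqrt_ySq hh
  have hs : IntervalIntegrable (fun x => x ^ 0 * √(ySq h x)) volume (-xmax h) (xmax h) :=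
    ((continuous_pow 0).mul (continuous_ySq h).sqrt).intervalIntegrable _ _
  have hintegrand : ∀ x, x ^ 0 * √(ySq h x) + (x ^ 2 / √(ySq h x) - x ^ 4 / √(ySq h x))
      = √(ySq h x) + x * (2 * x - 2 * x ^ 3) / (2 * √(ySq h x)) := fun x => by ring
  have hparts := integral_sqrt_add_mul_deriv_div_sqrt_eq_zero (neg_le_self (xmax_pos h).le)
    (continuous_ySq h).continuousOn (fun x _ => hasDerivAt_ySq h x)
    (fun x hx => (ySq_pos hh hx).ne')    (ySq_neg_xmax (by linarith)) (ySq_xmax (by linarith))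
    ((hs.add ((hi 2).sub (hi 4))).congr fun x _ => hintegrand x)
  rw [integral_congr fun x _ => (hintegrand x).symm, integral_add hs ((hi 2).sub (hi 4)),
    integral_sub (hi 2) (hi 4)] at hparts
  rw [ellI_eq, ellI'_eq, ellI'_eq]
  linarith

end Duffing

/-- First Picard-Fuchs relation. -/
theorem picard_fuchs_one (h : ℝ) (hh : 0 < h) :
    ellI 0 h = (4/3) * h * ellI' 0 h + (1/3) * ellI' 2 h := by
  linarith [ellI_zero_eq hh, ellI'_four_eq hh]
end

section
/- As h → 0⁺ one has the limits I_0(h) → 4/3, I_2(h) → 16/15, and I'_4(h) → 16/3, i.e. the three complete elliptic integrals extend continuously to h = 0 with these values (the values of the corresponding integrals along one loop of the figure-eight level curve {H = 0}). -/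
open Real Set Filter intervalIntegral

/-!
Substituting `x = xmax h * t` moves the integrals onto `[-1, 1]`, where the radicand factors as
`xmax h ^ 2 / 2 * (1 - t ^ 2) * (xmax h ^ 2 * t ^ 2 + √(1 + 4 h) - 1)`. The rescaled integrands
of `I₀` and `I₂` are jointly continuous in `(h, t)`, so these are continuous in `h`; that of `I'₄`
is dominated by `16 √2 / √(1 - t ^ 2)` for `0 ≤ h ≤ 2`, so dominated convergence applies.
At `h = 0` the integrands over `[0, √2]` are derivatives of polynomials in `√(1 - x ^ 2 / 2)`.
-/

open MeasureTheory

lemma one_le_xmax (h : ℝ) : 1 ≤ xmax h := by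
  rw [xmax, Real.one_le_sqrt]
  linarith [Real.sqrt_nonneg (1 + 4 * h)]

lemma xmax_le_two {h : ℝ} (h2 : h ≤ 2) : xmax h ≤ 2 := by
  rw [xmax, Real.sqrt_le_left (by norm_num)]
  have : √(1 + 4 * h) ≤ 3 := Real.sqrt_le_iff.2 ⟨by norm_num, by linarith⟩
  linarith

lemma xmax_zero : xmax 0 = √2 := by
  norm_num [xmax]

@[fun_prop]
lemma continuous_xmax : Continuous xmax := by
  unfold xmax; fun_prop

lemma radicand_xmax_mul {h : ℝ} (hh : 0 ≤ 1 + 4 * h) (t : ℝ) :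
    2 * h + (xmax h * t) ^ 2 - (xmax h * t) ^ 4 / 2
      = xmax h ^ 2 / 2 * ((1 - t ^ 2) * (xmax h ^ 2 * t ^ 2 + (√(1 + 4 * h) - 1))) := by
  have hx : xmax h ^ 2 = 1 + √(1 + 4 * h) := Real.sq_sqrt (by positivity)
  have hs : √(1 + 4 * h) ^ 2 = 1 + 4 * h := Real.sq_sqrt hh
  rw [mul_pow, mul_pow, show xmax h ^ 4 = (xmax h ^ 2) ^ 2 by ring, hx]
  linear_combination (-1/2 : ℝ) * hs

lemma integral_neg_self_eq_integral_comp_mul (f : ℝ → ℝ) (c : ℝ) :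
    ∫ x in -c..c, f x = ∫ t in -1..1, c * f (c * t) := by
  rw [intervalIntegral.integral_const_mul, intervalIntegral.mul_integral_comp_mul_left]
  simp

lemma integral_neg_self_of_even {f : ℝ → ℝ} (hf : ∀ x, f (-x) = f x) (a : ℝ) :
    ∫ x in -a..a, f x = 2 * ∫ x in 0..a, f x := by
  have hsymm : ∫ x in -a..0, f x = ∫ x in 0..a, f x := by
    simpa [hf] using (intervalIntegral.integral_comp_neg (a := 0) (b := a) f).symm
  by_cases hint : IntervalIntegrable f volume 0 a
  · have hint' : IntervalIntegrable f volume (-a) 0 := by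
      simpa [hf] using ((IntervalIntegrable.iff_comp_neg).mp hint).symm
    rw [← intervalIntegral.integral_add_adjacent_intervals hint' hint, hsymm]
    ring
  · have hsub : uIcc 0 a ⊆ uIcc (-a) a := by
      apply uIcc_subset_uIcc _ right_mem_uIcc
      rcases le_total 0 a with ha | ha <;> simp [ha]
    rw [intervalIntegral.integral_undef hint,
      intervalIntegral.integral_undef fun h' => hint (h'.mono_set hsub), mul_zero]

lemma one_sub_sq_div_two_pos {x : ℝ} (hx : x ∈ Ioo 0 √2) : 0 < 1 - x ^ 2 / 2 := by
  nlinarith [hx.1, hx.2, Real.sq_sqrt (zero_le_two : (0 : ℝ) ≤ 2)]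

lemma integral_zero_sqrt_two_of_hasDerivAt_comp {f P P' : ℝ → ℝ}
    (hP : ∀ v, HasDerivAt P (P' v) v)
    (hf : ∀ x ∈ Ioo 0 √2, f x = P' √(1 - x ^ 2 / 2) * (-x / (2 * √(1 - x ^ 2 / 2))))
    (hf_nonneg : ∀ x ∈ Ioo 0 √2, 0 ≤ f x) :
    ∫ x in 0..√2, f x = P 0 - P 1 := by
  have hcont : ContinuousOn (fun x => P √(1 - x ^ 2 / 2)) (Icc 0 √2) :=
    ((continuous_iff_continuousAt.2 fun v => (hP v).continuousAt).comp
      (by fun_prop)).continuousOn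
  have hderiv : ∀ x ∈ Ioo 0 √2, HasDerivAt (fun x => P √(1 - x ^ 2 / 2)) (f x) x := by
    intro x hx
    have hin : HasDerivAt (fun x : ℝ => 1 - x ^ 2 / 2) (-x) x := by
      simpa using ((hasDerivAt_pow 2 x).div_const 2).const_sub 1
    rw [hf x hx]
    exact (hP _).comp x (hin.sqrt (one_sub_sq_div_two_pos hx).ne')
  have hab : (0 : ℝ) ≤ √2 := Real.sqrt_nonneg 2
  rw [intervalIntegral.integral_eq_sub_of_hasDerivAt_of_le hab hcont hderiv
    ((intervalIntegrable_iff_integrableOn_Ioc_of_le hab).2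
      (intervalIntegral.integrableOn_deriv_of_nonneg hcont hderiv hf_nonneg))]
  norm_num

lemma sqrt_radicand_zero {x : ℝ} (hx : 0 ≤ x) :
    √(2 * 0 + x ^ 2 - x ^ 4 / 2) = x * √(1 - x ^ 2 / 2) := by
  rw [show 2 * 0 + x ^ 2 - x ^ 4 / 2 = x ^ 2 * (1 - x ^ 2 / 2) by ring,
    Real.sqrt_mul (sq_nonneg x), Real.sqrt_sq hx]

lemma ellI_zero_zero : ellI 0 0 = 4 / 3 := by
  rw [ellI, xmax_zero, integral_neg_self_of_even (fun x => by ring_nf),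
    integral_zero_sqrt_two_of_hasDerivAt_comp (P := fun v => -(2 / 3) * v ^ 3)
      (P' := fun v => -2 * v ^ 2)
      (fun v => ((hasDerivAt_pow 3 v).const_mul _).congr_deriv (by ring))]
  · norm_num
  · intro x hx
    rw [sqrt_radicand_zero hx.1.le]
    field_simp
  · intro x hx
    rw [sqrt_radicand_zero hx.1.le]
    exact mul_nonneg (pow_nonneg hx.1.le _) (mul_nonneg hx.1.le (Real.sqrt_nonneg _))

lemma ellI_two_zero : ellI 2 0 = 16 / 15 := by
  rw [ellI, xmax_zero, integral_neg_self_of_even (fun x => by ring_nf),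
    integral_zero_sqrt_two_of_hasDerivAt_comp
      (P := fun v => -(4 / 3) * v ^ 3 + 4 / 5 * v ^ 5) (P' := fun v => -4 * v ^ 2 + 4 * v ^ 4)
      (fun v => (((hasDerivAt_pow 3 v).const_mul _).add
        ((hasDerivAt_pow 5 v).const_mul _)).congr_deriv (by ring))]
  · norm_num
  · intro x hx
    have hpos := one_sub_sq_div_two_pos hx
    have hv := Real.sq_sqrt hpos.le
    have hv0 := Real.sqrt_pos.2 hpos
    rw [sqrt_radicand_zero hx.1.le]
    generalize √(1 - x ^ 2 / 2) = v at *
    field_simp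
    linear_combination (4 * x) * hv
  · intro x hx
    rw [sqrt_radicand_zero hx.1.le]
    exact mul_nonneg (pow_nonneg hx.1.le _) (mul_nonneg hx.1.le (Real.sqrt_nonneg _))

lemma ellI'_four_zero : ellI' 4 0 = 16 / 3 := by
  rw [ellI', xmax_zero, integral_neg_self_of_even (fun x => by ring_nf),
    integral_zero_sqrt_two_of_hasDerivAt_comp
      (P := fun v => -4 * v + 4 / 3 * v ^ 3) (P' := fun v => -4 + 4 * v ^ 2)
      (fun v => (((hasDerivAt_id v).const_mul _).add
        ((hasDerivAt_pow 3 v).const_mul _)).congr_deriv (by ring))]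
  · norm_num
  · intro x hx
    have hpos := one_sub_sq_div_two_pos hx
    have hv := Real.sq_sqrt hpos.le
    have hv0 := Real.sqrt_pos.2 hpos
    rw [sqrt_radicand_zero hx.1.le]
    generalize √(1 - x ^ 2 / 2) = v at *
    field_simp
    linear_combination (4 * x) * hv
  · intro x hx
    rw [sqrt_radicand_zero hx.1.le]
    exact div_nonneg (pow_nonneg hx.1.le _) (mul_nonneg hx.1.le (Real.sqrt_nonneg _))

lemma continuous_ellI (i : ℕ) : Continuous (ellI i) := by
  have hscaled : ellI i = fun h => ∫ t in -1..1,
      xmax h * ((xmax h * t) ^ i * √(2 * h + (xmax h * t) ^ 2 - (xmax h * t) ^ 4 / 2)) :=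
    funext fun h => integral_neg_self_eq_integral_comp_mul _ _
  rw [hscaled]
  exact intervalIntegral.continuous_parametric_intervalIntegral_of_continuous' (by fun_prop) _ _

/-- `xmax h * (x ^ 4 / √(2 h + x ^ 2 - x ^ 4 / 2))` at `x = xmax h * t`, with the radicand
factored by `radicand_xmax_mul`. -/
noncomputable def ellI'FourIntegrand (h t : ℝ) : ℝ :=
  √2 * xmax h ^ 4 * √(1 - t ^ 2)⁻¹ * (t ^ 4 / √(xmax h ^ 2 * t ^ 2 + (√(1 + 4 * h) - 1)))

lemma ellI'_four_eq_integral {h : ℝ} (hh : 0 ≤ h) :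
    ellI' 4 h = ∫ t in -1..1, ellI'FourIntegrand h t := by
  rw [ellI', integral_neg_self_eq_integral_comp_mul]
  refine intervalIntegral.integral_congr fun t _ => ?_
  have hs : 1 ≤ √(1 + 4 * h) := Real.one_le_sqrt.2 (by linarith)
  have ha : xmax h ≠ 0 := (zero_lt_one.trans_le (one_le_xmax h)).ne'
  rw [radicand_xmax_mul (by linarith), Real.sqrt_mul (by positivity),
    Real.sqrt_mul' _ (by nlinarith [sq_nonneg (xmax h * t)]), Real.sqrt_div' _ zero_le_two,
    Real.sqrt_sq (zero_le_one.trans (one_le_xmax h)), ellI'FourIntegrand, Real.sqrt_inv]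
  field_simp

lemma norm_ellI'FourIntegrand_le {h t : ℝ} (hh : 0 ≤ h) (h2 : h ≤ 2) (ht : |t| ≤ 1) :
    ‖ellI'FourIntegrand h t‖ ≤ 16 * √2 * √(1 - t ^ 2)⁻¹ := by
  have hs : 1 ≤ √(1 + 4 * h) := Real.one_le_sqrt.2 (by linarith)
  have ha := one_le_xmax h
  have hfactor : √2 * xmax h ^ 4 * √(1 - t ^ 2)⁻¹ ≤ 16 * √2 * √(1 - t ^ 2)⁻¹ := by
    rw [mul_comm 16]
    gcongr
    calc xmax h ^ 4 ≤ 2 ^ 4 := by gcongr; exact xmax_le_two h2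
      _ = 16 := by norm_num
  have habs : |t| ≤ √(xmax h ^ 2 * t ^ 2 + (√(1 + 4 * h) - 1)) := by
    rw [← Real.sqrt_sq_eq_abs]
    have ha2 : t ^ 2 ≤ xmax h ^ 2 * t ^ 2 :=
      le_mul_of_one_le_left (sq_nonneg t) (one_le_pow₀ ha)
    exact Real.sqrt_le_sqrt (by linarith)
  have hquot : t ^ 4 / √(xmax h ^ 2 * t ^ 2 + (√(1 + 4 * h) - 1)) ≤ 1 := by
    refine div_le_one_of_le₀ (le_trans ?_ habs) (Real.sqrt_nonneg _)
    calc t ^ 4 = |t| ^ 4 := by rw [pow_abs, abs_of_nonneg (by positivity)]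
      _ ≤ |t| := pow_le_of_le_one (abs_nonneg t) ht (by norm_num)
  unfold ellI'FourIntegrand
  rw [Real.norm_of_nonneg (by positivity)]
  simpa using mul_le_mul hfactor hquot (by positivity) (by positivity)

lemma continuousAt_ellI'FourIntegrand (t : ℝ) :
    ContinuousAt (fun h => ellI'FourIntegrand h t) 0 := by
  rcases eq_or_ne t 0 with rfl | ht
  · simp [ellI'FourIntegrand, continuousAt_const]
  have hden : √(xmax 0 ^ 2 * t ^ 2 + (√(1 + 4 * 0) - 1)) ≠ 0 := by
    rw [xmax_zero, Real.sq_sqrt zero_le_two]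
    norm_num
    positivity
  unfold ellI'FourIntegrand
  exact (ContinuousAt.mul (by fun_prop) (continuousAt_const.div (by fun_prop) hden))

lemma tendsto_ellI'_four : Tendsto (ellI' 4) (nhdsWithin 0 (Ioi 0)) (nhds (ellI' 4 0)) := by
  have hnear : Ioc (0 : ℝ) 2 ∈ nhdsWithin (0 : ℝ) (Ioi 0) :=
    Ioc_mem_nhdsGT_of_mem ⟨le_rfl, two_pos⟩
  rw [ellI'_four_eq_integral le_rfl]
  refine Tendsto.congr' (eventually_of_mem hnear fun h hh => (ellI'_four_eq_integral hh.1.le).symm)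
    (intervalIntegral.tendsto_integral_filter_of_dominated_convergence _ ?_ ?_
      (Polynomial.Chebyshev.intervalIntegrable_sqrt_one_sub_sq_inv.const_mul (16 * √2)) ?_)
  · exact Eventually.of_forall fun h => by unfold ellI'FourIntegrand; fun_prop
  · filter_upwards [hnear] with h hh
    refine ae_of_all _ fun t ht => norm_ellI'FourIntegrand_le hh.1.le hh.2 ?_
    rw [uIoc_of_le (by norm_num)] at ht
    exact abs_le.2 ⟨ht.1.le, ht.2⟩
  · exact ae_of_all _ fun t _ =>
      (continuousAt_ellI'FourIntegrand t).tendsto.mono_left nhdsWithin_le_nhds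

/-- Limits at the figure-eight: `I₀ → 4/3`, `I₂ → 16/15`, `I₄' → 16/3` as `h → 0⁺`. -/
theorem ellI_limits_at_loop :
    Tendsto (ellI 0) (nhdsWithin 0 (Ioi 0)) (nhds (4/3)) ∧
    Tendsto (ellI 2) (nhdsWithin 0 (Ioi 0)) (nhds (16/15)) ∧
    Tendsto (ellI' 4) (nhdsWithin 0 (Ioi 0)) (nhds (16/3)) := by
  refine ⟨?_, ?_, ?_⟩
  · rw [← ellI_zero_zero]
    exact (continuous_ellI 0).continuousWithinAt
  · rw [← ellI_two_zero]
    exact (continuous_ellI 2).continuousWithinAt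
  · rw [← ellI'_four_zero]
    exact tendsto_ellI'_four
end
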